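/- Let Y be a standard normal random variable, let G : [0,∞) → ℝ be nondecreasing and right-continuous, and let u ∈ ℝ be such that a := inf{x ≥ 0 : G(x) > u} satisfies 0 < a < ∞. Then E[Y · 1{G(|Y|) > u}] = 0 and E[(Y² − 1) · 1{G(|Y|) > u}] = 2 a φ(a) ≠ 0. In particular, the Hermite rank of the function y ↦ 1{G(|y|) > u} − P(G(|Y|) > u) equals 2. -/

import Mathlib

/-!
Because `G` is nondecreasing, `{y : G(|y|) > u}` coincides with `{y : |y| > a}` off the Lebesgue
null set `{|y| = a}`. The first expectation then vanishes because `y ↦ y · 1{|y| > a}` is odd and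
the standard Gaussian law is symmetric. For the second, `(y² - 1) φ(y) = φ''(y)`, so
`E[(Y² - 1) 1{|Y| > a}] = 2 ∫_a^∞ φ'' = -2 φ'(a) = 2 a φ(a)`.
-/

open MeasureTheory ProbabilityTheory Set

noncomputable section

/-- the standard normal density -/
def stdGaussDensity (x : ℝ) : ℝ := (Real.sqrt (2 * Real.pi))⁻¹ * Real.exp (-x ^ 2 / 2)

open Filter Topology
open scoped NNReal

lemma stdGaussDensity_pos (x : ℝ) : 0 < stdGaussDensity x := by
  unfold stdGaussDensity
  positivity

lemma stdGaussDensity_abs (x : ℝ) : stdGaussDensity |x| = stdGaussDensity x := by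
  simp [stdGaussDensity, sq_abs]

lemma gaussianPDFReal_zero_one : gaussianPDFReal 0 1 = stdGaussDensity := by
  ext x
  simp [gaussianPDFReal, stdGaussDensity]

lemma hasDerivAt_stdGaussDensity (x : ℝ) :
    HasDerivAt stdGaussDensity (-x * stdGaussDensity x) x := by
  have hexp : HasDerivAt (fun y : ℝ => Real.exp (-y ^ 2 / 2)) (Real.exp (-x ^ 2 / 2) * -x) x := by
    have h := ((hasDerivAt_pow 2 x).neg.div_const 2).exp
    rwa [Nat.cast_ofNat, pow_one, neg_div, mul_div_cancel_left₀ x two_ne_zero] at h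
  refine (hexp.const_mul (Real.sqrt (2 * Real.pi))⁻¹).congr_deriv ?_
  simp only [stdGaussDensity]
  ring

lemma integrable_stdGaussDensity_mul_sq_sub_one :
    Integrable (fun x : ℝ => stdGaussDensity x * (x ^ 2 - 1)) := by
  have hsq : Integrable (fun x : ℝ => x ^ (2 : ℝ) * Real.exp (-(1 / 2) * x ^ 2)) :=
    integrable_rpow_mul_exp_neg_mul_sq (by norm_num) (by norm_num)
  have hexp : Integrable (fun x : ℝ => Real.exp (-(1 / 2) * x ^ 2)) :=
    integrable_exp_neg_mul_sq (by norm_num)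
  refine ((hsq.sub hexp).const_mul (Real.sqrt (2 * Real.pi))⁻¹).congr (ae_of_all _ fun x => ?_)
  simp only [Pi.sub_apply, stdGaussDensity, Real.rpow_two]
  ring_nf

lemma tendsto_mul_stdGaussDensity_atTop :
    Tendsto (fun x : ℝ => x * stdGaussDensity x) atTop (𝓝 0) := by
  have hexp : Tendsto (fun x : ℝ => Real.exp (-(1 / 2) * x)) atTop (𝓝 0) :=
    Real.tendsto_exp_atBot.comp (tendsto_id.const_mul_atTop_of_neg (by norm_num))
  have h := (((rpow_mul_exp_neg_mul_sq_isLittleO_exp_neg (by norm_num : (0 : ℝ) < 1 / 2) 1).isBigO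
    ).trans_tendsto hexp).const_mul (Real.sqrt (2 * Real.pi))⁻¹
  rw [mul_zero] at h
  refine h.congr fun x => ?_
  simp only [Real.rpow_one, stdGaussDensity]
  ring_nf

lemma integral_Ioi_stdGaussDensity_mul_sq_sub_one (a : ℝ) :
    ∫ x in Ioi a, stdGaussDensity x * (x ^ 2 - 1) = a * stdGaussDensity a := by
  have hderiv : ∀ x ∈ Ici a, HasDerivAt (fun y : ℝ => -(y * stdGaussDensity y))
      (stdGaussDensity x * (x ^ 2 - 1)) x := fun x _ => by
    refine ((hasDerivAt_id' x).mul (hasDerivAt_stdGaussDensity x)).neg.congr_deriv ?_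
    ring
  rw [integral_Ioi_of_hasDerivAt_of_tendsto' hderiv
    integrable_stdGaussDensity_mul_sq_sub_one.integrableOn tendsto_mul_stdGaussDensity_atTop.neg]
  ring

lemma integral_gaussianReal_eq_zero_of_odd {v : ℝ≥0} {f : ℝ → ℝ}
    (hf : ∀ x, f (-x) = -f x) :
    ∫ x, f x ∂gaussianReal 0 v = 0 := by
  have hsymm : ∫ x, f (-x) ∂gaussianReal 0 v = ∫ x, f x ∂gaussianReal 0 v := by
    have h := (Homeomorph.neg ℝ).measurableEmbedding.integral_map f (μ := gaussianReal 0 v)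
    rwa [Homeomorph.coe_neg, gaussianReal_map_neg, neg_zero, eq_comm] at h
  simp only [hf, integral_neg] at hsymm
  linarith

lemma integral_gaussianReal_ite_lt_abs_sq_sub_one {a : ℝ} (ha : 0 ≤ a) :
    ∫ y, (if a < |y| then y ^ 2 - 1 else 0) ∂gaussianReal 0 1 = 2 * a * stdGaussDensity a := by
  set f := (Ioi a).indicator fun x => stdGaussDensity x * (x ^ 2 - 1)
  have hf : ∀ y, gaussianPDFReal 0 1 y • (if a < |y| then y ^ 2 - 1 else 0) = f |y| := by
    intro y
    by_cases h : a < |y| <;>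
      simp [f, h, gaussianPDFReal_zero_one, stdGaussDensity_abs, sq_abs]
  calc ∫ y, (if a < |y| then y ^ 2 - 1 else 0) ∂gaussianReal 0 1
      = ∫ y, f |y| := by simp only [integral_gaussianReal_eq_integral_smul one_ne_zero, hf]
    _ = 2 * ∫ x in Ioi 0, f x := integral_comp_abs
    _ = 2 * ∫ x in Ioi a, stdGaussDensity x * (x ^ 2 - 1) := by
      rw [setIntegral_indicator measurableSet_Ioi, Ioi_inter_Ioi, max_eq_right ha]
    _ = 2 * a * stdGaussDensity a := by
      rw [integral_Ioi_stdGaussDensity_mul_sq_sub_one]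
      ring

lemma ae_lt_comp_abs_iff_sInf_lt {G : ℝ → ℝ} {u : ℝ} (hG : MonotoneOn G (Ici 0))
    (hne : {x : ℝ | 0 ≤ x ∧ u < G x}.Nonempty) :
    ∀ᵐ y : ℝ, u < G |y| ↔ sInf {x : ℝ | 0 ≤ x ∧ u < G x} < |y| := by
  set S := {x : ℝ | 0 ≤ x ∧ u < G x}
  have hS : BddBelow S := ⟨0, fun x hx => hx.1⟩
  filter_upwards [Measure.ae_ne volume (sInf S), Measure.ae_ne volume (-sInf S)] with y hya hyna
  constructor
  · intro hy
    refine (csInf_le hS ⟨abs_nonneg y, hy⟩).lt_of_ne fun h => ?_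
    rcases eq_or_eq_neg_of_abs_eq h.symm with h | h
    exacts [hya h, hyna h]
  · intro hy
    obtain ⟨x, hx, hxy⟩ := exists_lt_of_csInf_lt hne hy
    exact hx.2.trans_le (hG hx.1 (abs_nonneg y) hxy.le)

theorem hermite_rank_two_abs_indicator_general {Ω : Type*} [MeasurableSpace Ω]
    (P : Measure Ω)
    (Y : Ω → ℝ) (hYmeas : Measurable Y)
    (hY : Measure.map Y P = gaussianReal 0 1)
    (G : ℝ → ℝ) (hGmono : MonotoneOn G (Set.Ici 0))
    (u : ℝ) (hne : {x : ℝ | 0 ≤ x ∧ u < G x}.Nonempty)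
    (ha : 0 < sInf {x : ℝ | 0 ≤ x ∧ u < G x}) :
    (∫ ω, (if u < G |Y ω| then Y ω else 0) ∂P) = 0 ∧
    (∫ ω, (if u < G |Y ω| then Y ω ^ 2 - 1 else 0) ∂P) =
      2 * sInf {x : ℝ | 0 ≤ x ∧ u < G x} * stdGaussDensity (sInf {x : ℝ | 0 ≤ x ∧ u < G x}) ∧
    2 * sInf {x : ℝ | 0 ≤ x ∧ u < G x} * stdGaussDensity (sInf {x : ℝ | 0 ≤ x ∧ u < G x})
      ≠ 0 := by
  set a := sInf {x : ℝ | 0 ≤ x ∧ u < G x}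
  have hlaw : HasLaw Y (gaussianReal 0 1) P := ⟨hYmeas.aemeasurable, hY⟩
  have hae : ∀ᵐ ω ∂P, u < G |Y ω| ↔ a < |Y ω| := ae_of_ae_map hYmeas.aemeasurable <| by
    rw [hY]
    exact gaussianReal_absolutelyContinuous 0 one_ne_zero (ae_lt_comp_abs_iff_sInf_lt hGmono hne)
  have hlevel : MeasurableSet {y : ℝ | a < |y|} :=
    measurableSet_lt measurable_const measurable_abs
  have hreduce : ∀ f : ℝ → ℝ, Measurable f →
      ∫ ω, (if u < G |Y ω| then f (Y ω) else 0) ∂P =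
        ∫ y, (if a < |y| then f y else 0) ∂gaussianReal 0 1 := fun f hf => by
    rw [← hlaw.integral_comp (Measurable.ite hlevel hf measurable_const).aestronglyMeasurable]
    exact integral_congr_ae (hae.mono fun ω h => by simp only [Function.comp_apply, h])
  refine ⟨?_, ?_, (mul_pos (mul_pos two_pos ha) (stdGaussDensity_pos a)).ne'⟩
  · refine (hreduce id measurable_id).trans (integral_gaussianReal_eq_zero_of_odd fun y => ?_)
    simp only [abs_neg, id]
    split_ifs <;> simp
  · exact (hreduce (· ^ 2 - 1) (by fun_prop)).trans
      (integral_gaussianReal_ite_lt_abs_sq_sub_one ha.le)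

/-- for a nondecreasing right-continuous `G` on `[0,∞)` and a level `u` whose
generalized inverse `a = inf{x ≥ 0 : G(x) > u}` satisfies `0 < a < ∞`, one has
`E[Y·1{G(|Y|) > u}] = 0` and `E[(Y²−1)·1{G(|Y|) > u}] = 2aφ(a) ≠ 0`; i.e. the function
`y ↦ 1{G(|y|) > u} − P(G(|Y|) > u)` has Hermite rank 2. -/
theorem hermite_rank_two_abs_indicator {Ω : Type*} [MeasurableSpace Ω]
    (P : Measure Ω) [IsProbabilityMeasure P]
    (Y : Ω → ℝ) (hYmeas : Measurable Y)
    (hY : Measure.map Y P = gaussianReal 0 1)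
    (G : ℝ → ℝ) (hGmono : MonotoneOn G (Set.Ici 0))
    (hGrc : ∀ x ≥ (0 : ℝ), ContinuousWithinAt G (Set.Ici x) x)
    (u : ℝ) (hne : {x : ℝ | 0 ≤ x ∧ u < G x}.Nonempty)
    (ha : 0 < sInf {x : ℝ | 0 ≤ x ∧ u < G x}) :
    (∫ ω, (if u < G |Y ω| then Y ω else 0) ∂P) = 0 ∧
    (∫ ω, (if u < G |Y ω| then Y ω ^ 2 - 1 else 0) ∂P) =
      2 * sInf {x : ℝ | 0 ≤ x ∧ u < G x} * stdGaussDensity (sInf {x : ℝ | 0 ≤ x ∧ u < G x}) ∧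
    2 * sInf {x : ℝ | 0 ≤ x ∧ u < G x} * stdGaussDensity (sInf {x : ℝ | 0 ≤ x ∧ u < G x})
      ≠ 0 :=
  hermite_rank_two_abs_indicator_general P Y hYmeas hY G hGmono u hne ha

end
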